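/- arXiv:2305.19338 — 4 statements merged into one kernel-verified Lean document; each statement's English description precedes it below -/
import Mathlib

section
/- For every real $x$ with $0 < x < 1$, $2x - \frac{\left(\frac{1}{2}+\frac{5x}{8}\right)^2}{\frac{1}{2}+\frac{5x}{16}} - \frac{4}{x}\log\left(\frac{2-x}{2(1-x)}\right) + \frac{4}{8-5x} + 2 \leq 0$. -/
/-!
With `t = x / (4 - 3x)` one has `(2 - x) / (2(1 - x)) = (1 + t) / (1 - t)`, so the logarithm is
`log (1 + t) - log (1 - t) = 2 ∑ t^(2k+1) / (2k+1) ≥ 2t`. This bounds the logarithmic term by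
`8 / (4 - 3x)`, and the remaining rational inequality reduces, after clearing denominators,
to `x (128 + 1056 x - 300 x² - 225 x³) ≥ 0` on `[0, 1]`.
-/

open Real

theorem two_mul_le_log_one_add_sub_log_one_sub {t : ℝ} (ht0 : 0 ≤ t) (ht1 : t < 1) :
    2 * t ≤ log (1 + t) - log (1 - t) := by
  have hsum := hasSum_log_sub_log_of_abs_lt_one (abs_lt.2 ⟨by linarith, ht1⟩)
  simpa using le_hasSum hsum 0 fun k _ => by positivity

theorem two_mul_div_le_log_div {x : ℝ} (hx0 : 0 ≤ x) (hx1 : x < 1) :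
    2 * x / (4 - 3 * x) ≤ log ((2 - x) / (2 * (1 - x))) := by
  have hd : 0 < 4 - 3 * x := by linarith
  have ht1 : x / (4 - 3 * x) < 1 := by rw [div_lt_one hd]; linarith
  have hratio : (2 - x) / (2 * (1 - x)) = (1 + x / (4 - 3 * x)) / (1 - x / (4 - 3 * x)) := by
    rw [one_add_div hd.ne', one_sub_div hd.ne', div_div_div_cancel_right₀ hd.ne',
      div_eq_div_iff (by linarith) (by linarith)]
    ring
  rw [hratio, log_div (by positivity) (by linarith), mul_div_assoc]
  exact two_mul_le_log_one_add_sub_log_one_sub (by positivity) ht1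

theorem rational_terms_le_eight_div {x : ℝ} (hx0 : 0 ≤ x) (hx1 : x ≤ 1) :
    2 * x - (1 / 2 + 5 * x / 8) ^ 2 / (1 / 2 + 5 * x / 16) + 4 / (8 - 5 * x) + 2
      ≤ 8 / (4 - 3 * x) := by
  have h3 : 0 < 4 - 3 * x := by linarith
  have h5 : 0 < 8 - 5 * x := by linarith
  have hgap : 8 / (4 - 3 * x)
      - (2 * x - (1 / 2 + 5 * x / 8) ^ 2 / (1 / 2 + 5 * x / 16) + 4 / (8 - 5 * x) + 2)
      = x * (128 + 1056 * x - 300 * x ^ 2 - 225 * x ^ 3)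
        / (4 * (4 - 3 * x) * (8 - 5 * x) * (8 + 5 * x)) := by
    have : 8 - x * 5 ≠ 0 := by linarith
    field_simp
    ring
  have hnum : 0 ≤ 128 + 1056 * x - 300 * x ^ 2 - 225 * x ^ 3 := by
    nlinarith [mul_le_mul hx1 hx1 hx0 zero_le_one]
  have := div_nonneg (mul_nonneg hx0 hnum)
    (by positivity : (0 : ℝ) ≤ 4 * (4 - 3 * x) * (8 - 5 * x) * (8 + 5 * x))
  linarith

theorem stmt_12 (x : ℝ) (hx0 : 0 < x) (hx1 : x < 1) :
    2 * x - (1 / 2 + 5 * x / 8) ^ 2 / (1 / 2 + 5 * x / 16)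
      - (4 / x) * Real.log ((2 - x) / (2 * (1 - x)))
      + 4 / (8 - 5 * x) + 2 ≤ 0 := by
  have hlog : 8 / (4 - 3 * x) ≤ (4 / x) * Real.log ((2 - x) / (2 * (1 - x))) :=
    calc 8 / (4 - 3 * x) = (4 / x) * (2 * x / (4 - 3 * x)) := by field_simp; ring
      _ ≤ _ := by gcongr; exact two_mul_div_le_log_div hx0.le hx1
  linarith [rational_terms_le_eight_div hx0.le hx1.le]
end

section
/- For every real $k \geq 1$, $(7k-4)\log\left(\frac{k^2+7k-2}{8k}\right) + (4-6k)\log\left(\frac{3}{4}-\frac{1}{4k}\right) > 0$. -/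
/-! With `A = (k² + 7k - 2)/(8k)` and `B = 3/4 - 1/(4k)`, bound `log A ≥ 1 - A⁻¹` and, since
`4 - 6k < 0`, use `log B < B - 1` (strict because `B < 1`). The resulting rational lower bound
simplifies to `2(17k² - 4)(k² - 1) / (4k(k² + 7k - 2))`, which is nonnegative for `k ≥ 1`. -/

open Real

lemma linearized_eq {k : ℝ} (hk : k ≠ 0) (hq : k ^ 2 + 7 * k - 2 ≠ 0) :
    (7 * k - 4) * (1 - ((k ^ 2 + 7 * k - 2) / (8 * k))⁻¹)
      + (4 - 6 * k) * ((3 / 4 - 1 / (4 * k)) - 1)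
      = 2 * (17 * k ^ 2 - 4) * (k ^ 2 - 1) / (4 * k * (k ^ 2 + 7 * k - 2)) := by
  generalize hq_def : k ^ 2 + 7 * k - 2 = q at hq ⊢
  field_simp
  subst hq_def
  ring

lemma linearized_nonneg {k : ℝ} (hk : 1 ≤ k) :
    0 ≤ (7 * k - 4) * (1 - ((k ^ 2 + 7 * k - 2) / (8 * k))⁻¹)
      + (4 - 6 * k) * ((3 / 4 - 1 / (4 * k)) - 1) := by
  have hq : 0 < k ^ 2 + 7 * k - 2 := by nlinarith
  rw [linearized_eq (by positivity) hq.ne']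
  have h17 : 0 ≤ 17 * k ^ 2 - 4 := by nlinarith
  have hsq : 0 ≤ k ^ 2 - 1 := by nlinarith
  positivity

theorem stmt_13 (k : ℝ) (hk : 1 ≤ k) :
    (7 * k - 4) * Real.log ((k ^ 2 + 7 * k - 2) / (8 * k))
      + (4 - 6 * k) * Real.log (3 / 4 - 1 / (4 * k)) > 0 := by
  have hk0 : 0 < k := by linarith
  have hA : 0 < (k ^ 2 + 7 * k - 2) / (8 * k) := div_pos (by nlinarith) (by positivity)
  have hinv : 0 < 1 / (4 * k) ∧ 1 / (4 * k) ≤ 1 / 4 :=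
    ⟨by positivity, one_div_le_one_div_of_le (by norm_num) (by linarith)⟩
  have hlogA := mul_le_mul_of_nonneg_left (one_sub_inv_le_log_of_pos hA)
    (show 0 ≤ 7 * k - 4 by linarith)
  have hlogB := mul_lt_mul_of_neg_left
    (log_lt_sub_one_of_pos (x := 3 / 4 - 1 / (4 * k)) (by linarith) (by linarith))
    (show 4 - 6 * k < 0 by linarith)
  linarith [linearized_nonneg hk]
end

section
/- For every integer $k \geq 13$, $\frac{k^2+3k-2}{2k^2}\log\left(\frac{k^2+3k-2}{2k^2}\right) - \frac{k-1}{k^2}\log\left(\frac{k-1}{k^2}\right) - \frac{(k-1)\log k}{2k} + \frac{1}{2}\log k < 0$. -/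
/-!
Write `c = (3x - 2) / (2x²)`. The expression equals
`(1/2 + c) log (1/2 + c) + c log x + (x - 1)/x² · log (x / (x - 1))`.
Bounding each logarithm by `log t ≤ t - 1` (applied to `1 + 2c`, to `x / (x - 1)` and to `x / 13`)
leaves a rational function of `x` plus `log 2` and `log 13`; the leading term `-(1/2) log 2` wins
against the `O(log x / x)` corrections already at `x = 13`, where the margin is about `0.002`.
-/

open Real

lemma Real.log_thirteen_lt : log 13 < 2.566 := by
  have h2197 : log 2197 = 3 * log 13 := by
    rw [show (2197 : ℝ) = 13 ^ 3 by norm_num, log_pow]; norm_num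
  have h2048 : log 2048 = 11 * log 2 := by
    rw [show (2048 : ℝ) = 2 ^ 11 by norm_num, log_pow]; norm_num
  have hquot : log (2197 / 2048) ≤ 2197 / 2048 - 1 := log_le_sub_one_of_pos (by norm_num)
  rw [log_div (by norm_num) (by norm_num), h2197, h2048] at hquot
  linarith [log_two_lt_d9]

lemma Real.log_le_tangent_at_thirteen {x : ℝ} (hx : 0 < x) : log x ≤ 2.566 + (x / 13 - 1) := by
  have h := log_le_sub_one_of_pos (div_pos hx (by norm_num : (0 : ℝ) < 13))
  rw [log_div hx.ne' (by norm_num)] at h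
  linarith [log_thirteen_lt]

noncomputable def entropyGap (x : ℝ) : ℝ :=
  (x ^ 2 + 3 * x - 2) / (2 * x ^ 2) * log ((x ^ 2 + 3 * x - 2) / (2 * x ^ 2))
    - (x - 1) / x ^ 2 * log ((x - 1) / x ^ 2)
    - (x - 1) * log x / (2 * x) + (1 / 2) * log x

lemma entropyGap_eq {x : ℝ} (hx : 1 < x) :
    entropyGap x =
      (1 / 2 + (3 * x - 2) / (2 * x ^ 2)) * log (1 / 2 + (3 * x - 2) / (2 * x ^ 2))
        + (3 * x - 2) / (2 * x ^ 2) * log x + (x - 1) / x ^ 2 * log (x / (x - 1)) := by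
  have hx0 : x ≠ 0 := by positivity
  have hx1 : x - 1 ≠ 0 := by linarith
  rw [entropyGap, show (x ^ 2 + 3 * x - 2) / (2 * x ^ 2) = 1 / 2 + (3 * x - 2) / (2 * x ^ 2) by
      field_simp; ring,
    log_div hx1 (pow_ne_zero 2 hx0), log_div hx0 hx1, log_pow]
  field_simp
  ring

lemma entropyGap_majorant_neg {x : ℝ} (hx : 13 ≤ x) :
    (1 / 2 + (3 * x - 2) / (2 * x ^ 2)) * (2 * ((3 * x - 2) / (2 * x ^ 2)) - 0.6931)
      + (3 * x - 2) / (2 * x ^ 2) * (2.566 + (x / 13 - 1)) + 1 / x ^ 2 < 0 := by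
  have hx0 : 0 < x := by linarith
  rw [← sub_neg]
  field_simp
  nlinarith [sq_nonneg (x - 13)]

lemma entropyGap_neg {x : ℝ} (hx : 13 ≤ x) : entropyGap x < 0 := by
  have hx0 : 0 < x := by linarith
  have hx1 : 0 < x - 1 := by linarith
  rw [entropyGap_eq (by linarith)]
  set c := (3 * x - 2) / (2 * x ^ 2)
  have hc0 : 0 < c := div_pos (by linarith) (by positivity)
  have h_half : log (1 / 2 + c) ≤ 2 * c - 0.6931 := by
    have h := log_le_sub_one_of_pos (show 0 < 2 * (1 / 2 + c) by positivity)
    rw [log_mul two_ne_zero (by positivity)] at h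
    linarith [log_two_gt_d9]
  have h_ratio : (x - 1) / x ^ 2 * log (x / (x - 1)) ≤ 1 / x ^ 2 := by
    calc (x - 1) / x ^ 2 * log (x / (x - 1))
        ≤ (x - 1) / x ^ 2 * (x / (x - 1) - 1) := by
          gcongr
          exact log_le_sub_one_of_pos (by positivity)
      _ = 1 / x ^ 2 := by field_simp; ring
  calc (1 / 2 + c) * log (1 / 2 + c) + c * log x + (x - 1) / x ^ 2 * log (x / (x - 1))
      ≤ (1 / 2 + c) * (2 * c - 0.6931) + c * (2.566 + (x / 13 - 1)) + 1 / x ^ 2 := by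
        gcongr
        exact log_le_tangent_at_thirteen hx0
    _ < 0 := entropyGap_majorant_neg hx

theorem stmt_15 (k : ℕ) (hk : 13 ≤ k) :
    ((k : ℝ) ^ 2 + 3 * k - 2) / (2 * k ^ 2) *
        Real.log (((k : ℝ) ^ 2 + 3 * k - 2) / (2 * k ^ 2))
      - ((k : ℝ) - 1) / k ^ 2 * Real.log (((k : ℝ) - 1) / k ^ 2)
      - ((k : ℝ) - 1) * Real.log k / (2 * k)
      + (1 / 2) * Real.log k < 0 :=
  entropyGap_neg (by exact_mod_cast hk)
end

section
/- For every integer $k \geq 2$, $\frac{k^2+3k-2}{2k^2}\log\left(\frac{k^2+3k-2}{2k^2}\right) - \frac{k-1}{k^2}\log\left(\frac{k-1}{k^2}\right) - \frac{(k-1)\log k}{k} + \frac{3}{2}\log k > 0$. -/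
/-! With `A = (x² + 3x - 2) / (2x²)` and `B = (x - 1) / x²`, the bound `y log y ≥ y - 1` gives
`A log A > A - 1 > -1/2`, while `0 < B < 1` makes `-B log B` positive. The two `log x` terms combine
to `(1/2 + 1/x) log x`, and `log x ≥ 1 - 1/x` shows this is at least `1/2` once `x ≥ 2`. -/

open Real

lemma half_le_mul_log_of_two_le {x : ℝ} (hx : 2 ≤ x) : 1 / 2 ≤ (1 / 2 + x⁻¹) * log x := by
  have hinv_pos : 0 < x⁻¹ := by positivity
  have hinv_le : x⁻¹ ≤ 1 / 2 := by rw [inv_le_comm₀ (by linarith) (by norm_num)]; linarith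
  calc 1 / 2 ≤ (1 / 2 + x⁻¹) * (1 - x⁻¹) := by nlinarith
    _ ≤ (1 / 2 + x⁻¹) * log x := by
      gcongr
      exact one_sub_inv_le_log_of_pos (by linarith)

theorem mul_log_sub_mul_log_add_log_pos {x : ℝ} (hx : 2 ≤ x) :
    (x ^ 2 + 3 * x - 2) / (2 * x ^ 2) * log ((x ^ 2 + 3 * x - 2) / (2 * x ^ 2))
      - (x - 1) / x ^ 2 * log ((x - 1) / x ^ 2)
      - (x - 1) * log x / x
      + (3 / 2) * log x > 0 := by
  have hx2 : 0 < x ^ 2 := by positivity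
  have hA : 1 / 2 < (x ^ 2 + 3 * x - 2) / (2 * x ^ 2) := by
    rw [lt_div_iff₀ (by positivity)]; linarith
  have hAlogA := self_sub_one_le_mul_log (x := (x ^ 2 + 3 * x - 2) / (2 * x ^ 2)) (by linarith)
  have hBlogB : (x - 1) / x ^ 2 * log ((x - 1) / x ^ 2) < 0 :=
    mul_log_neg (div_pos (by linarith) hx2) (by rw [div_lt_one hx2]; nlinarith)
  have hlog : (3 / 2) * log x - (x - 1) * log x / x = (1 / 2 + x⁻¹) * log x := by
    field_simp; ring
  linarith [half_le_mul_log_of_two_le hx]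

theorem stmt_16 (k : ℕ) (hk : 2 ≤ k) :
    ((k : ℝ) ^ 2 + 3 * k - 2) / (2 * k ^ 2) *
        Real.log (((k : ℝ) ^ 2 + 3 * k - 2) / (2 * k ^ 2))
      - ((k : ℝ) - 1) / k ^ 2 * Real.log (((k : ℝ) - 1) / k ^ 2)
      - ((k : ℝ) - 1) * Real.log k / k
      + (3 / 2) * Real.log k > 0 :=
  mul_log_sub_mul_log_add_log_pos (by exact_mod_cast hk)
end
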